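/- arXiv:2410.01217 — 4 statements merged into one kernel-verified Lean document; each statement's English description precedes it below -/
import Mathlib

section
/- A word w is Ulam if and only if its reverse is Ulam. -/
/-- Ulam words with fuel bounding the recursion depth (fuel ≥ length suffices). -/
def UlamN : ℕ → List Bool → Prop
  | 0, _ => False
  | n + 1, w =>
    w = [false] ∨ w = [true] ∨
      ∃! p : List Bool × List Bool,
        p.1 ≠ [] ∧ p.2 ≠ [] ∧ UlamN n p.1 ∧ UlamN n p.2 ∧ p.1 ≠ p.2 ∧ p.1 ++ p.2 = w

/-- A word over {0,1} (`false` = 0, `true` = 1) is Ulam. -/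
def IsUlam (w : List Bool) : Prop := UlamN w.length w

/-- The integer whose binary representation (most significant digit first) is `w`. -/
def binVal (w : List Bool) : ℕ := w.foldl (fun acc b => 2 * acc + b.toNat) 0

lemma ulamN_reverse : ∀ n w, UlamN n w → UlamN n w.reverse := by
  intro n
  induction n with
  | zero => intro w h; exact h.elim
  | succ n ih =>
    intro w h
    rcases h with h | h | ⟨p, ⟨h1, h2, h3, h4, h5, h6⟩, huniq⟩
    · left; simp [h]
    · right; left; simp [h]
    · right; right
      refine ⟨(p.2.reverse, p.1.reverse), ⟨by simpa using h2, by simpa using h1,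
        ih _ h4, ih _ h3, ?_, by simp [← h6]⟩, ?_⟩
      · intro he
        exact h5 ((List.reverse_injective (by simpa using he.symm)))
      · rintro ⟨q1, q2⟩ ⟨g1, g2, g3, g4, g5, g6⟩
        have key : (q2.reverse, q1.reverse) = p := by
          apply huniq
          refine ⟨by simpa using g2, by simpa using g1, ih _ g4, ih _ g3, ?_, ?_⟩
          · intro he; exact g5 (List.reverse_injective (by simpa using he.symm))
          · apply List.reverse_injective
            simpa using g6
        have e1 : q2.reverse = p.1 := congrArg Prod.fst key
        have e2 : q1.reverse = p.2 := congrArg Prod.snd key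
        have : q1 = p.2.reverse := by rw [← e2, List.reverse_reverse]
        have : q2 = p.1.reverse := by rw [← e1, List.reverse_reverse]
        simp_all

theorem ulam_reverse (w : List Bool) :
    IsUlam w ↔ IsUlam w.reverse := by
  unfold IsUlam
  rw [List.length_reverse]
  constructor
  · exact ulamN_reverse _ w
  · intro h
    have := ulamN_reverse _ _ h
    simpa using this
end

section
/- For any nonnegative integers a, b, the word 0^a 1^2 0^b is Ulam if and only if a + b is odd. -/
open List

/-- The splittings of `w` counted in the definition of Ulam words, for `P = IsUlam`. -/
def IsDistinctSplit {α : Type*} (P : List α → Prop) (w : List α) (p : List α × List α) :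
    Prop :=
  p.1 ≠ [] ∧ p.2 ≠ [] ∧ P p.1 ∧ P p.2 ∧ p.1 ≠ p.2 ∧ p.1 ++ p.2 = w

section IsDistinctSplit

variable {α : Type*} {P Q : List α → Prop} {w : List α} {p : List α × List α}

theorem IsDistinctSplit.length_pos (h : IsDistinctSplit P w p) :
    0 < p.1.length ∧ 0 < p.2.length :=
  ⟨length_pos_iff.2 h.1, length_pos_iff.2 h.2.1⟩

theorem IsDistinctSplit.length_add_length (h : IsDistinctSplit P w p) :
    p.1.length + p.2.length = w.length := by
  rw [← length_append, h.2.2.2.2.2]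

theorem IsDistinctSplit.length_lt (h : IsDistinctSplit P w p) :
    p.1.length < w.length ∧ p.2.length < w.length := by
  have := h.length_pos
  have := h.length_add_length
  omega

theorem IsDistinctSplit.two_le_length (h : IsDistinctSplit P w p) : 2 ≤ w.length := by
  have := h.length_pos
  have := h.length_add_length
  omega

theorem IsDistinctSplit.mono (h : IsDistinctSplit P w p)
    (hPQ : ∀ u : List α, u.length < w.length → P u → Q u) : IsDistinctSplit Q w p :=
  let ⟨h1, h2, hP1, hP2, hne, happ⟩ := h
  ⟨h1, h2, hPQ _ h.length_lt.1 hP1, hPQ _ h.length_lt.2 hP2, hne, happ⟩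

theorem isDistinctSplit_congr (hPQ : ∀ u : List α, u.length < w.length → (P u ↔ Q u)) :
    IsDistinctSplit P w p ↔ IsDistinctSplit Q w p :=
  ⟨fun h => h.mono fun u hu => (hPQ u hu).1, fun h => h.mono fun u hu => (hPQ u hu).2⟩

theorem not_isDistinctSplit_nil : ¬IsDistinctSplit P [] p :=
  fun h => by simpa using h.two_le_length

end IsDistinctSplit

theorem not_ulamN_nil (n : ℕ) : ¬UlamN n [] := by
  cases n with
  | zero => exact id
  | succ n =>
    rintro (h | h | ⟨p, hp, -⟩)
    · cases h
    · cases h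
    · exact not_isDistinctSplit_nil hp

theorem ulamN_succ_iff_of_length_le {n : ℕ} {w : List Bool} (hw : w.length ≤ n) :
    UlamN (n + 1) w ↔ UlamN n w := by
  induction n generalizing w with
  | zero =>
    rw [nonpos_iff_eq_zero, length_eq_zero_iff] at hw
    subst hw
    exact iff_of_false (not_ulamN_nil _) (not_ulamN_nil _)
  | succ n ih =>
    exact or_congr_right <| or_congr_right <| existsUnique_congr fun p =>
      isDistinctSplit_congr fun u hu => ih (by omega)

theorem ulamN_iff_isUlam {n : ℕ} {w : List Bool} (hw : w.length ≤ n) :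
    UlamN n w ↔ IsUlam w := by
  induction n, hw using Nat.le_induction with
  | base => rfl
  | succ n hn ih => exact (ulamN_succ_iff_of_length_le hn).trans ih

theorem not_isUlam_nil : ¬IsUlam [] := not_ulamN_nil 0

theorem isUlam_iff {w : List Bool} :
    IsUlam w ↔ w = [false] ∨ w = [true] ∨ ∃! p, IsDistinctSplit IsUlam w p := by
  cases w with
  | nil => simp [not_isUlam_nil, not_isDistinctSplit_nil]
  | cons x xs =>
    exact or_congr_right <| or_congr_right <| existsUnique_congr fun p =>
      isDistinctSplit_congr fun u hu => ulamN_iff_isUlam (by simpa [Nat.lt_succ_iff] using hu)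

theorem isUlam_singleton (x : Bool) : IsUlam [x] := by
  cases x <;> simp [isUlam_iff]

theorem isUlam_iff_existsUnique {w : List Bool} (hw : 2 ≤ w.length) :
    IsUlam w ↔ ∃! p, IsDistinctSplit IsUlam w p := by
  rw [isUlam_iff, or_iff_right, or_iff_right] <;> rintro rfl <;> simp at hw

theorem isUlam_of_forall_eq {w : List Bool} {p : List Bool × List Bool}
    (hp : IsDistinctSplit IsUlam w p) (huniq : ∀ q, IsDistinctSplit IsUlam w q → q = p) :
    IsUlam w :=
  (isUlam_iff_existsUnique hp.two_le_length).2 ⟨p, hp, huniq⟩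

theorem not_isUlam_of_ne {w : List Bool} {p q : List Bool × List Bool}
    (hp : IsDistinctSplit IsUlam w p) (hq : IsDistinctSplit IsUlam w q) (hpq : p ≠ q) :
    ¬IsUlam w :=
  fun h => hpq (((isUlam_iff_existsUnique hp.two_le_length).1 h).unique hp hq)

theorem eq_replicate_of_append_eq_replicate_append {α : Type*} {x : α} {a : ℕ}
    {u v w : List α} (h : u ++ v = replicate a x ++ w) (hu : u.length ≤ a) :
    u = replicate u.length x ∧ v = replicate (a - u.length) x ++ w := by
  rw [← Nat.add_sub_cancel' hu, replicate_add, append_assoc] at h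
  exact append_inj h (by simp)

theorem eq_replicate_of_append_eq_append_replicate {α : Type*} {x : α} {b : ℕ}
    {u v w : List α} (h : u ++ v = w ++ replicate b x) (hv : v.length ≤ b) :
    u = w ++ replicate (b - v.length) x ∧ v = replicate v.length x := by
  rw [← Nat.sub_add_cancel hv, replicate_add, ← append_assoc] at h
  exact append_inj' h (by simp)

theorem isUlam_replicate_iff {x : Bool} {k : ℕ} : IsUlam (replicate k x) ↔ k = 1 := by
  induction k using Nat.strong_induction_on with
  | _ k ih =>
    refine ⟨fun h => ?_, by rintro rfl; exact isUlam_singleton x⟩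
    match k, h with
    | 0, h => exact absurd h not_isUlam_nil
    | 1, _ => rfl
    | k + 2, h =>
      obtain ⟨p, hp, -⟩ := (isUlam_iff_existsUnique (by simp)).1 h
      have hlt := hp.length_lt
      obtain ⟨-, -, hu1, hu2, hne, happ⟩ := hp
      obtain ⟨-, hp1, hp2⟩ := append_eq_replicate_iff.1 happ
      rw [hp1] at hu1
      rw [hp2] at hu2
      have hl1 := ih _ (by simpa using hlt.1) |>.1 hu1
      have hl2 := ih _ (by simpa using hlt.2) |>.1 hu2
      exact absurd (by rw [hp1, hp2, hl1, hl2]) hne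

theorem IsDistinctSplit.eq_of_fst_length_le {x : Bool} {a : ℕ} {w : List Bool}
    {p : List Bool × List Bool} (h : IsDistinctSplit IsUlam (replicate a x ++ w) p)
    (hp : p.1.length ≤ a) : p = ([x], replicate (a - 1) x ++ w) := by
  obtain ⟨-, -, hu1, -, -, happ⟩ := h
  obtain ⟨hp1, hp2⟩ := eq_replicate_of_append_eq_replicate_append happ hp
  rw [hp1, isUlam_replicate_iff] at hu1
  rw [hu1] at hp1 hp2
  exact Prod.ext hp1 hp2

theorem IsDistinctSplit.eq_of_snd_length_le {x : Bool} {b : ℕ} {w : List Bool}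
    {p : List Bool × List Bool} (h : IsDistinctSplit IsUlam (w ++ replicate b x) p)
    (hp : p.2.length ≤ b) : p = (w ++ replicate (b - 1) x, [x]) := by
  obtain ⟨-, -, -, hu2, -, happ⟩ := h
  obtain ⟨hp1, hp2⟩ := eq_replicate_of_append_eq_append_replicate happ hp
  rw [hp2, isUlam_replicate_iff] at hu2
  rw [hu2] at hp1 hp2
  exact Prod.ext hp1 hp2

theorem isUlam_replicate_append_singleton {x y : Bool} (hxy : x ≠ y) (a : ℕ) :
    IsUlam (replicate a x ++ [y]) := by
  induction a with
  | zero => exact isUlam_singleton y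
  | succ a ih =>
    refine isUlam_of_forall_eq (p := ([x], replicate a x ++ [y]))
      ⟨by simp, by simp, isUlam_singleton x, ih, fun h => hxy ?_, by simp [replicate_succ]⟩
      fun q hq => ?_
    · simpa using congrArg getLast? h
    · have := hq.length_pos
      have := hq.length_add_length
      simpa using hq.eq_of_fst_length_le (by simp at *; omega)

theorem isUlam_cons_replicate {x y : Bool} (hxy : x ≠ y) (b : ℕ) :
    IsUlam (y :: replicate b x) := by
  induction b with
  | zero => exact isUlam_singleton y
  | succ b ih =>
    refine isUlam_of_forall_eq (p := (y :: replicate b x, [x]))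
      ⟨by simp, by simp, ih, isUlam_singleton x, fun h => hxy ?_, by simp [replicate_succ']⟩
      fun q hq => ?_
    · simpa using congrArg head? h.symm
    · have := hq.length_pos
      have := hq.length_add_length
      rw [← singleton_append] at hq
      simpa using hq.eq_of_snd_length_le (by simp at *; omega)

def twoOnes (a b : ℕ) : List Bool := replicate a false ++ replicate 2 true ++ replicate b false

theorem twoOnes_length (a b : ℕ) : (twoOnes a b).length = a + b + 2 := by
  simp [twoOnes]
  omega

theorem twoOnes_eq_replicate_append (a b : ℕ) :
    twoOnes a b = replicate a false ++ (true :: true :: replicate b false) := by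
  simp [twoOnes]

theorem isDistinctSplit_twoOnes_middle {a b : ℕ} (hab : a + b ≠ 0) :
    IsDistinctSplit IsUlam (twoOnes a b)
      (replicate a false ++ [true], true :: replicate b false) := by
  refine ⟨by simp, by simp, isUlam_replicate_append_singleton Bool.false_ne_true a,
    isUlam_cons_replicate Bool.false_ne_true b, ?_, by simp [twoOnes]⟩
  cases a with
  | zero => simpa using hab
  | succ a => simp [replicate_succ]

theorem isDistinctSplit_twoOnes_succ_left {a b : ℕ} (h : IsUlam (twoOnes a b)) :
    IsDistinctSplit IsUlam (twoOnes (a + 1) b) ([false], twoOnes a b) := by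
  refine ⟨by simp, by simp [twoOnes], isUlam_singleton false, h, fun he => ?_, ?_⟩
  · simpa [twoOnes_length] using congrArg length he
  · simp [twoOnes, replicate_succ]

theorem isDistinctSplit_twoOnes_succ_right {a b : ℕ} (h : IsUlam (twoOnes a b)) :
    IsDistinctSplit IsUlam (twoOnes a (b + 1)) (twoOnes a b, [false]) := by
  refine ⟨by simp [twoOnes], by simp, h, isUlam_singleton false, fun he => ?_, ?_⟩
  · simpa [twoOnes_length] using congrArg length he
  · simp [twoOnes, replicate_succ']

theorem IsDistinctSplit.twoOnes_cases {a b : ℕ} {p : List Bool × List Bool}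
    (h : IsDistinctSplit IsUlam (twoOnes a b) p) :
    p = (replicate a false ++ [true], true :: replicate b false) ∨
      (0 < a ∧ IsUlam (twoOnes (a - 1) b)) ∨ (0 < b ∧ IsUlam (twoOnes a (b - 1))) := by
  have hpos := h.length_pos
  have hlen := h.length_add_length
  rw [twoOnes_length] at hlen
  rcases lt_trichotomy p.1.length (a + 1) with hk | hk | hk
  · rw [twoOnes_eq_replicate_append] at h
    have hp := h.eq_of_fst_length_le (by omega)
    refine Or.inr (Or.inl ⟨by omega, ?_⟩)
    simpa [hp, twoOnes_eq_replicate_append] using h.2.2.2.1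
  · left
    have happ := h.2.2.2.2.2
    rw [twoOnes_eq_replicate_append, ← singleton_append, ← append_assoc] at happ
    exact Prod.ext_iff.2 (append_inj happ (by simpa using hk))
  · have hp := h.eq_of_snd_length_le (by omega)
    refine Or.inr (Or.inr ⟨by omega, ?_⟩)
    have hu := h.2.2.1
    rw [hp] at hu
    exact hu

theorem isUlam_twoOnes_iff {a b : ℕ} (hab : a + b ≠ 0) :
    IsUlam (twoOnes a b) ↔
      (0 < a → ¬IsUlam (twoOnes (a - 1) b)) ∧ (0 < b → ¬IsUlam (twoOnes a (b - 1))) := by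
  refine ⟨fun h => ⟨fun ha hu => ?_, fun hb hu => ?_⟩, fun ⟨ha, hb⟩ => ?_⟩
  · obtain ⟨c, rfl⟩ := Nat.exists_eq_add_of_lt ha
    refine not_isUlam_of_ne (isDistinctSplit_twoOnes_middle hab)
      (isDistinctSplit_twoOnes_succ_left hu) (fun he => ?_) h
    simpa using congrArg (length ∘ Prod.fst) he
  · obtain ⟨c, rfl⟩ := Nat.exists_eq_add_of_lt hb
    refine not_isUlam_of_ne (isDistinctSplit_twoOnes_middle hab)
      (isDistinctSplit_twoOnes_succ_right hu) (fun he => ?_) h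
    simpa using congrArg (length ∘ Prod.snd) he
  · refine isUlam_of_forall_eq (isDistinctSplit_twoOnes_middle hab) fun q hq => ?_
    rcases hq.twoOnes_cases with hq | ⟨ha', hu⟩ | ⟨hb', hu⟩
    · exact hq
    · exact absurd hu (ha ha')
    · exact absurd hu (hb hb')

theorem ulam_two_ones (a b : ℕ) :
    IsUlam (List.replicate a false ++ List.replicate 2 true ++ List.replicate b false) ↔
      Odd (a + b) := by
  change IsUlam (twoOnes a b) ↔ _
  induction hn : a + b using Nat.strong_induction_on generalizing a b with
  | _ n ih =>
    subst hn
    rw [Nat.odd_iff]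
    by_cases hab : a + b = 0
    · obtain ⟨rfl, rfl⟩ : a = 0 ∧ b = 0 := by omega
      refine iff_of_false (fun h => ?_) (by decide)
      exact absurd (isUlam_replicate_iff (k := 2).1 h) (by decide)
    rw [isUlam_twoOnes_iff hab,
      imp_congr_right fun ha => not_congr (ih _ (by omega) (a - 1) b rfl),
      imp_congr_right fun hb => not_congr (ih _ (by omega) a (b - 1) rfl),
      Nat.odd_iff, Nat.odd_iff]
    omega
end

section
/- If w is an Ulam word of length n and π(w) denotes the integer whose n-digit binary representation is w, then the length-n word with binary value (2^n - 1) - π(w) (the complement of w) is also in U_n; consequently, for any positive integer N and any residue a mod N, the number of Ulam words of length n with π(w) ≡ a (mod N) equals the number with π(w) ≡ (2^n - 1 - a) (mod N). -/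
lemma mnot_mnot (w : List Bool) : (w.map (fun b => !b)).map (fun b => !b) = w := by
  simp [List.map_map, Function.comp_def]

lemma mnot_inj : Function.Injective (fun w : List Bool => w.map (fun b => !b)) := by
  intro a b h
  have := congrArg (fun w : List Bool => w.map (fun b => !b)) h
  simp only at this
  rwa [mnot_mnot, mnot_mnot] at this

lemma ulamN_not : ∀ n w, UlamN n w → UlamN n (w.map (fun b => !b)) := by
  intro n
  induction n with
  | zero => intro w h; exact h.elim
  | succ n ih =>
    intro w h
    rcases h with h | h | ⟨p, ⟨h1, h2, h3, h4, h5, h6⟩, huniq⟩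
    · subst h; right; left; rfl
    · subst h; left; rfl
    · right; right
      refine ⟨(p.1.map (fun b => !b), p.2.map (fun b => !b)),
        ⟨by simpa using h1, by simpa using h2, ih _ h3, ih _ h4,
         fun hc => h5 (mnot_inj hc), by rw [← List.map_append, h6]⟩, ?_⟩
      rintro ⟨q1, q2⟩ ⟨g1, g2, g3, g4, g5, g6⟩
      have g6' : (q1.map (fun b => !b)) ++ (q2.map (fun b => !b)) = w := by
        have := congrArg (fun w : List Bool => w.map (fun b => !b)) g6
        simp only [List.map_append] at this
        rwa [mnot_mnot] at this
      have := huniq (q1.map (fun b => !b), q2.map (fun b => !b))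
        ⟨by simpa using g1, by simpa using g2, ih _ g3, ih _ g4,
         fun hc => g5 (mnot_inj hc), g6'⟩
      have e1 : q1.map (fun b => !b) = p.1 := congrArg Prod.fst this
      have e2 : q2.map (fun b => !b) = p.2 := congrArg Prod.snd this
      have e1' : q1 = p.1.map (fun b => !b) := by rw [← e1, mnot_mnot]
      have e2' : q2 = p.2.map (fun b => !b) := by rw [← e2, mnot_mnot]
      simp [e1', e2']

lemma binVal_acc (w : List Bool) : ∀ a : ℕ,
    w.foldl (fun acc b => 2 * acc + b.toNat) a = a * 2 ^ w.length + binVal w := by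
  induction w with
  | nil => intro a; simp [binVal]
  | cons b w ih =>
    intro a
    simp only [List.foldl_cons, List.length_cons, binVal]
    rw [ih (2 * a + b.toNat), ih (2 * 0 + b.toNat)]
    ring

lemma binVal_cons (b : Bool) (w : List Bool) :
    binVal (b :: w) = b.toNat * 2 ^ w.length + binVal w := by
  simp only [binVal, List.foldl_cons]
  simpa [binVal] using binVal_acc w b.toNat

lemma binVal_add_compl (w : List Bool) :
    binVal w + binVal (w.map (fun b => !b)) = 2 ^ w.length - 1 := by
  induction w with
  | nil => simp [binVal]
  | cons b w ih =>
    have h1 : 1 ≤ 2 ^ w.length := Nat.one_le_two_pow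
    simp only [List.map_cons, binVal_cons, List.length_map, List.length_cons, pow_succ]
    have hb : b.toNat * 2 ^ w.length + (!b).toNat * 2 ^ w.length = 2 ^ w.length := by
      cases b <;> simp
    omega

lemma isUlam_not (w : List Bool) (h : IsUlam w) : IsUlam (w.map (fun b => !b)) := by
  unfold IsUlam at *
  rw [List.length_map]
  exact ulamN_not _ _ h

theorem ulam_complement_value_and_modular_symmetry (n : ℕ) :
    (∀ w : List Bool, w.length = n → IsUlam w →
      IsUlam (w.map (fun b => !b)) ∧ binVal (w.map (fun b => !b)) = 2 ^ n - 1 - binVal w) ∧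
    ∀ N : ℕ, 0 < N → ∀ a : ZMod N,
      {w : List Bool | w.length = n ∧ IsUlam w ∧ (binVal w : ZMod N) = a}.ncard =
        {w : List Bool | w.length = n ∧ IsUlam w ∧
          (binVal w : ZMod N) = ((2 ^ n - 1 : ℕ) : ZMod N) - a}.ncard := by
  have key : ∀ w : List Bool, w.length = n →
      binVal (w.map (fun b => !b)) = 2 ^ n - 1 - binVal w ∧ binVal w ≤ 2 ^ n - 1 := by
    intro w hw
    have := binVal_add_compl w
    rw [hw] at this
    omega
  have castkey : ∀ (N : ℕ) (w : List Bool), w.length = n →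
      ((binVal (w.map (fun b => !b)) : ℕ) : ZMod N)
        = ((2 ^ n - 1 : ℕ) : ZMod N) - (binVal w : ZMod N) := by
    intro N w hw
    obtain ⟨h1, h2⟩ := key w hw
    rw [h1, Nat.cast_sub h2]
  constructor
  · intro w hw hu
    exact ⟨isUlam_not w hu, (key w hw).1⟩
  · intro N hN a
    have himg : (fun w : List Bool => w.map (fun b => !b)) ''
        {w : List Bool | w.length = n ∧ IsUlam w ∧ (binVal w : ZMod N) = a} =
        {w : List Bool | w.length = n ∧ IsUlam w ∧
          (binVal w : ZMod N) = ((2 ^ n - 1 : ℕ) : ZMod N) - a} := by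
      ext w
      constructor
      · rintro ⟨x, ⟨hx1, hx2, hx3⟩, rfl⟩
        refine ⟨by simpa using hx1, isUlam_not x hx2, ?_⟩
        rw [castkey N x hx1, hx3]
      · rintro ⟨h1, h2, h3⟩
        refine ⟨w.map (fun b => !b), ⟨by simpa using h1, isUlam_not w h2, ?_⟩, mnot_mnot w⟩
        rw [castkey N w h1, h3]
        ring
    rw [← himg]
    exact (Set.ncard_image_of_injective _ mnot_inj).symm
end

section
/- For every integer n ≥ 2, neither the constant word 0^n nor the constant word 1^n is Ulam. -/
lemma ulam_aux : ∀ f k (b : Bool), 2 ≤ k → ¬ UlamN f (List.replicate k b) := by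
  intro f
  induction f with
  | zero => intro k b hk h; exact h
  | succ f ih =>
    intro k b hk h
    rcases h with h | h | ⟨p, ⟨h1, h2, hu1, hu2, hne, happ⟩, _⟩
    · have := congrArg List.length h; simp at this; omega
    · have := congrArg List.length h; simp at this; omega
    · have hmem : ∀ x ∈ p.1 ++ p.2, x = b := by
        intro x hx
        rw [happ] at hx
        exact (List.eq_of_mem_replicate hx)
      have hp1 : p.1 = List.replicate p.1.length b :=
        List.eq_replicate_of_mem (fun x hx => hmem x (List.mem_append_left _ hx))
      have hp2 : p.2 = List.replicate p.2.length b :=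
        List.eq_replicate_of_mem (fun x hx => hmem x (List.mem_append_right _ hx))
      have hlen : p.1.length + p.2.length = k := by
        have := congrArg List.length happ; simpa using this
      have hl1 : 1 ≤ p.1.length := List.length_pos_iff.mpr h1
      have hl2 : 1 ≤ p.2.length := List.length_pos_iff.mpr h2
      rcases Nat.lt_or_ge p.1.length 2 with hc1 | hc1
      · rcases Nat.lt_or_ge p.2.length 2 with hc2 | hc2
        · have e1 : p.1.length = 1 := by omega
          have e2 : p.2.length = 1 := by omega
          apply hne
          rw [hp1, hp2, e1, e2]
        · exact ih p.2.length b hc2 (hp2 ▸ hu2)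
      · exact ih p.1.length b hc1 (hp1 ▸ hu1)

theorem ulam_constant_not_ulam (n : ℕ) (hn : 2 ≤ n) :
    ¬ IsUlam (List.replicate n false) ∧ ¬ IsUlam (List.replicate n true) := by
  constructor <;>
  · unfold IsUlam
    exact ulam_aux _ n _ hn
end
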